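/- arXiv:2510.06656 — 3 statements merged into one kernel-verified Lean document; each statement's English description precedes it below -/
import Mathlib

section
/- Velocity averaging against test functions of subcubic growth under uniform third-moment bounds (intermediate claim in the proof of Lemma 3.12 / Lemma lem:subcubic). Let d ≥ 1, T > 0, and let Ω ⊆ ℝ^d be an open set. Suppose (f_m) is a sequence of nonnegative integrable functions on (0,T)×Ω×ℝ^d converging weakly in L¹ to f, that for each continuous compactly supported ψ : ℝ^d → ℝ the velocity averages (t,x) ↦ ∫_{ℝ^d} f_m(t,x,v)ψ(v) dv converge in L¹((0,T)×Ω), and that sup_m ∫_{(0,T)×Ω×ℝ^d} |v|³ f_m(t,x,v) dt dx dv < ∞. Then for every continuous φ : ℝ^d → ℝ of subcubic growth, i.e. such that |φ(v)|/(1+|v|)³ → 0 as |v| → ∞, the averages ∫_{ℝ^d} f_m(t,x,v) φ(v) dv converge to ∫_{ℝ^d} f(t,x,v) φ(v) dv in L¹((0,T)×Ω). -/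
open MeasureTheory Filter Topology
open scoped ENNReal

/-!
Given `δ > 0`, cut `φ` off to a continuous compactly supported `ψ` with
`|φ - ψ| ≤ δ (1 + |v|)³`. The averages against `ψ` converge in `L¹` by hypothesis, and their
limit is `∫ f ψ dv`, since testing against bounded functions of `(t, x)` shows that the averages
converge weakly to it. The averages against `φ - ψ` are at most `δ` times the weighted mass
`∫ (1 + |v|)³ f`, which is bounded uniformly in `m`: for `f_m` by the mass bound coming from weak
convergence together with the third-moment bound, and for the weak limit `f` because weighted
masses are weakly lower semicontinuous.
-/

/-- The restricted Lebesgue measure on `(0,T) × Ω × ℝ^d`. -/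
noncomputable def kineticMeasure (d : ℕ) (T : ℝ) (Ω : Set (EuclideanSpace ℝ (Fin d))) :
    Measure (ℝ × EuclideanSpace ℝ (Fin d) × EuclideanSpace ℝ (Fin d)) :=
  volume.restrict ((Set.Ioo (0 : ℝ) T) ×ˢ (Ω ×ˢ (Set.univ : Set (EuclideanSpace ℝ (Fin d)))))

/-- The restricted Lebesgue measure on `(0,T) × Ω`. -/
noncomputable def baseMeasure (d : ℕ) (T : ℝ) (Ω : Set (EuclideanSpace ℝ (Fin d))) :
    Measure (ℝ × EuclideanSpace ℝ (Fin d)) :=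
  volume.restrict ((Set.Ioo (0 : ℝ) T) ×ˢ Ω)

/-- The velocity average `(t,x) ↦ ∫_{ℝ^d} f(t,x,v) ψ(v) dv`. -/
noncomputable def velAvg {d : ℕ}
    (f : ℝ × EuclideanSpace ℝ (Fin d) × EuclideanSpace ℝ (Fin d) → ℝ)
    (ψ : EuclideanSpace ℝ (Fin d) → ℝ)
    (p : ℝ × EuclideanSpace ℝ (Fin d)) : ℝ :=
  ∫ v, f (p.1, p.2, v) * ψ v

def TendstoWeaklyL1 {α : Type*} [MeasurableSpace α] (μ : Measure α) (F : ℕ → α → ℝ)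
    (G : α → ℝ) : Prop :=
  ∀ φ : α → ℝ, Measurable φ → (∃ C : ℝ, ∀ x, |φ x| ≤ C) →
    Tendsto (fun m => ∫ x, F m x * φ x ∂μ) atTop (𝓝 (∫ x, G x * φ x ∂μ))

section WeakConvergence

variable {α : Type*} [MeasurableSpace α] {μ : Measure α} {F : ℕ → α → ℝ} {G : α → ℝ}

theorem tendstoWeaklyL1_of_tendsto_integral_abs_sub (hF : ∀ m, Integrable (F m) μ)
    (hG : Integrable G μ) (h : Tendsto (fun m => ∫ x, |F m x - G x| ∂μ) atTop (𝓝 0)) :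
    TendstoWeaklyL1 μ F G := by
  rintro φ hφ ⟨C, hC⟩
  have hFφ : ∀ H : α → ℝ, Integrable H μ → Integrable (fun x => H x * φ x) μ :=
    fun H hH => hH.mul_bdd hφ.aestronglyMeasurable (ae_of_all _ hC)
  rw [tendsto_iff_dist_tendsto_zero]
  refine squeeze_zero (fun _ => dist_nonneg) (fun m => ?_) (by simpa using h.const_mul C)
  rw [dist_eq_norm, ← integral_sub (hFφ (F m) (hF m)) (hFφ G hG),
    ← integral_const_mul C]
  refine norm_integral_le_of_norm_le (((hF m).sub hG).abs.const_mul C) (ae_of_all _ fun x => ?_)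
  rw [Real.norm_eq_abs, ← sub_mul, abs_mul, mul_comm]
  exact mul_le_mul_of_nonneg_right (hC x) (abs_nonneg _)

namespace TendstoWeaklyL1

theorem tendsto_setIntegral (h : TendstoWeaklyL1 μ F G) {s : Set α} (hs : MeasurableSet s) :
    Tendsto (fun m => ∫ x in s, F m x ∂μ) atTop (𝓝 (∫ x in s, G x ∂μ)) := by
  have hind : ∀ H : α → ℝ, ∫ x, H x * s.indicator 1 x ∂μ = ∫ x in s, H x ∂μ := fun H => by
    simp_rw [← Set.indicator_mul_right, Pi.one_apply, mul_one, integral_indicator hs]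
  simpa only [hind] using h (s.indicator 1) (measurable_const.indicator hs)
    ⟨1, fun x => by by_cases hx : x ∈ s <;> simp [hx]⟩

theorem exists_integral_le (h : TendstoWeaklyL1 μ F G) : ∃ M, ∀ m, ∫ x, F m x ∂μ ≤ M := by
  obtain ⟨M, hM⟩ := (h (fun _ => 1) measurable_const ⟨1, fun _ => by simp⟩).bddAbove_range
  exact ⟨M, fun m => by simpa using hM (Set.mem_range_self m)⟩

theorem ae_nonneg (h : TendstoWeaklyL1 μ F G) (hF0 : ∀ m, 0 ≤ᵐ[μ] F m)
    (hG : Integrable G μ) : 0 ≤ᵐ[μ] G :=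
  ae_nonneg_of_forall_setIntegral_nonneg hG fun _ hs _ =>
    ge_of_tendsto' (h.tendsto_setIntegral hs) fun m =>
      integral_nonneg_of_ae (ae_restrict_of_ae (hF0 m))

theorem ae_eq {G' : α → ℝ} (h : TendstoWeaklyL1 μ F G) (h' : TendstoWeaklyL1 μ F G')
    (hG : Integrable G μ) (hG' : Integrable G' μ) : G =ᵐ[μ] G' :=
  hG.ae_eq_of_forall_setIntegral_eq _ _ hG' fun _ hs _ =>
    tendsto_nhds_unique (h.tendsto_setIntegral hs) (h'.tendsto_setIntegral hs)

theorem comp_measurableEquiv {β : Type*} [MeasurableSpace β] {μ' : Measure β} {e : α ≃ᵐ β}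
    (he : MeasurePreserving e μ μ') {F : ℕ → β → ℝ} {G : β → ℝ}
    (h : TendstoWeaklyL1 μ' F G) : TendstoWeaklyL1 μ (fun m => F m ∘ e) (G ∘ e) := by
  rintro φ hφ ⟨C, hC⟩
  have hcomp : ∀ H : β → ℝ, ∫ x, H (e x) * φ x ∂μ = ∫ y, H y * φ (e.symm y) ∂μ' := fun H => by
    rw [← he.integral_comp e.measurableEmbedding]
    simp only [MeasurableEquiv.symm_apply_apply]
  simpa only [hcomp, Function.comp_apply] using
    h (φ ∘ e.symm) (hφ.comp e.symm.measurable) ⟨C, fun y => hC _⟩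

/-- Test against the bounded truncations `min w N`, then let `N → ∞` by monotone convergence. -/
theorem lintegral_ofReal_mul_le (h : TendstoWeaklyL1 μ F G) (hF : ∀ m, Integrable (F m) μ)
    (hF0 : ∀ m, 0 ≤ᵐ[μ] F m) (hG : Integrable G μ) (hG0 : 0 ≤ᵐ[μ] G) {w : α → ℝ}
    (hw : Measurable w) (hw0 : 0 ≤ w) {C : ℝ≥0∞}
    (hC : ∀ m, ∫⁻ x, ENNReal.ofReal (w x * F m x) ∂μ ≤ C) :
    ∫⁻ x, ENNReal.ofReal (w x * G x) ∂μ ≤ C := by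
  have hwN : ∀ N : ℕ, ∀ x, |min (w x) N| ≤ N := fun N x => by
    rw [abs_of_nonneg (le_min (hw0 x) N.cast_nonneg)]
    exact min_le_right _ _
  have htrunc : ∀ N : ℕ, ∫⁻ x, ENNReal.ofReal (min (w x) N * G x) ∂μ ≤ C := by
    intro N
    have hofReal : ∀ H : α → ℝ, Integrable H μ → 0 ≤ᵐ[μ] H →
        ENNReal.ofReal (∫ x, H x * min (w x) N ∂μ) =
          ∫⁻ x, ENNReal.ofReal (min (w x) N * H x) ∂μ := by
      intro H hH hH0
      rw [ofReal_integral_eq_lintegral_ofReal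
        (hH.mul_bdd (hw.min measurable_const).aestronglyMeasurable (ae_of_all _ (hwN N)))
        (hH0.mono fun x hx => mul_nonneg hx (le_min (hw0 x) N.cast_nonneg))]
      simp_rw [mul_comm]
    have hlim := ENNReal.tendsto_ofReal (h _ (hw.min measurable_const) ⟨N, hwN N⟩)
    rw [← hofReal G hG hG0]
    refine le_of_tendsto' hlim fun m => ?_
    rw [hofReal (F m) (hF m) (hF0 m)]
    refine (lintegral_mono_ae ((hF0 m).mono fun x hx => ?_)).trans (hC m)
    exact ENNReal.ofReal_le_ofReal (mul_le_mul_of_nonneg_right (min_le_left _ _) hx)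
  refine le_of_tendsto' (lintegral_tendsto_of_tendsto_of_monotone
    (f := fun (N : ℕ) x => ENNReal.ofReal (min (w x) N * G x))
    (fun N => ((hw.min measurable_const).aemeasurable.mul hG.aemeasurable).ennreal_ofReal)
    (hG0.mono fun x hx N M hNM => ENNReal.ofReal_le_ofReal
      (mul_le_mul_of_nonneg_right (min_le_min_left _ (Nat.cast_le.2 hNM)) hx))
    (ae_of_all _ fun x => ?_)) htrunc
  refine tendsto_const_nhds.congr' ((eventually_ge_atTop ⌈w x⌉₊).mono fun N hN => ?_)
  dsimp only
  rw [min_eq_left ((Nat.le_ceil _).trans (Nat.cast_le.2 hN))]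

end TendstoWeaklyL1

end WeakConvergence

section WeightedBounds

variable {α : Type*} [MeasurableSpace α] {μ : Measure α}

theorem lintegral_enorm_mul_le_of_abs_le {F χ w : α → ℝ} (hF0 : 0 ≤ᵐ[μ] F) {δ : ℝ}
    (hδ : 0 ≤ δ) (hχ : ∀ x, |χ x| ≤ δ * w x) :
    ∫⁻ x, ‖F x * χ x‖ₑ ∂μ ≤ ENNReal.ofReal δ * ∫⁻ x, ENNReal.ofReal (w x * F x) ∂μ := by
  rw [← lintegral_const_mul' _ _ ENNReal.ofReal_ne_top]
  refine lintegral_mono_ae (hF0.mono fun x hx => ?_)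
  rw [Real.enorm_eq_ofReal_abs, ← ENNReal.ofReal_mul hδ, abs_mul, abs_of_nonneg hx]
  refine ENNReal.ofReal_le_ofReal ?_
  calc F x * |χ x| ≤ F x * (δ * w x) := mul_le_mul_of_nonneg_left (hχ x) hx
    _ = δ * (w x * F x) := by ring

theorem integrable_mul_of_abs_le {F χ w : α → ℝ} (hF : AEStronglyMeasurable F μ)
    (hχ : AEStronglyMeasurable χ μ) (hF0 : 0 ≤ᵐ[μ] F) {δ : ℝ} (hδ : 0 ≤ δ)
    (hχw : ∀ x, |χ x| ≤ δ * w x) (hwF : ∫⁻ x, ENNReal.ofReal (w x * F x) ∂μ ≠ ∞) :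
    Integrable (fun x => F x * χ x) μ :=
  ⟨hF.mul hχ, (lintegral_enorm_mul_le_of_abs_le hF0 hδ hχw).trans_lt
    (ENNReal.mul_lt_top ENNReal.ofReal_lt_top hwF.lt_top)⟩

theorem lintegral_ofReal_one_add_pow_three_mul_le {F r : α → ℝ} (hF : AEMeasurable F μ)
    (hF0 : 0 ≤ᵐ[μ] F) (hr0 : ∀ x, 0 ≤ r x) :
    ∫⁻ x, ENNReal.ofReal ((1 + r x) ^ 3 * F x) ∂μ ≤
      4 * ∫⁻ x, ENNReal.ofReal (F x) ∂μ + 4 * ∫⁻ x, ENNReal.ofReal (r x ^ 3 * F x) ∂μ := by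
  rw [← lintegral_const_mul' _ _ ENNReal.ofNat_ne_top,
    ← lintegral_const_mul' _ _ ENNReal.ofNat_ne_top,
    ← lintegral_add_left' (hF.ennreal_ofReal.const_mul _)]
  refine lintegral_mono_ae (hF0.mono fun x hx => ?_)
  have hcube : (1 + r x) ^ 3 ≤ 4 + 4 * r x ^ 3 := by
    nlinarith [mul_nonneg (sq_nonneg (r x - 1)) (by linarith [hr0 x] : 0 ≤ 1 + r x)]
  calc ENNReal.ofReal ((1 + r x) ^ 3 * F x)
      ≤ ENNReal.ofReal (4 * F x + 4 * (r x ^ 3 * F x)) :=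
        ENNReal.ofReal_le_ofReal (by nlinarith [mul_le_mul_of_nonneg_right hcube hx])
    _ ≤ ENNReal.ofReal (4 * F x) + ENNReal.ofReal (4 * (r x ^ 3 * F x)) := ENNReal.ofReal_add_le
    _ = 4 * ENNReal.ofReal (F x) + 4 * ENNReal.ofReal (r x ^ 3 * F x) := by
        rw [ENNReal.ofReal_mul zero_le_four, ENNReal.ofReal_mul zero_le_four,
          ENNReal.ofReal_ofNat]

theorem lintegral_enorm_sub_le_add {f g h : α → ℝ} (hf : AEStronglyMeasurable f μ)
    (hg : AEStronglyMeasurable g μ) :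
    ∫⁻ x, ‖f x - h x‖ₑ ∂μ ≤ ∫⁻ x, ‖f x - g x‖ₑ ∂μ + ∫⁻ x, ‖g x - h x‖ₑ ∂μ := by
  rw [← lintegral_add_left' (f := fun x => ‖f x - g x‖ₑ) (hf.sub hg).enorm]
  exact lintegral_mono fun x => by simpa only [← edist_eq_enorm_sub] using edist_triangle _ _ _

end WeightedBounds

theorem ENNReal.tendsto_atTop_zero_of_forall_le_add_mul {a : ℕ → ℝ≥0∞} {C : ℝ≥0∞} (hC : C ≠ ∞)
    (h : ∀ δ : ℝ, 0 < δ → ∃ b : ℕ → ℝ≥0∞, Tendsto b atTop (𝓝 0) ∧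
      ∀ m, a m ≤ b m + ENNReal.ofReal δ * C) :
    Tendsto a atTop (𝓝 0) := by
  rw [ENNReal.tendsto_atTop_zero]
  intro ε hε
  have hε2 : 0 < ε / 2 := ENNReal.half_pos hε.ne'
  obtain ⟨δ, hδ, hδC⟩ := ENNReal.exists_nnreal_pos_mul_lt hC hε2.ne'
  obtain ⟨b, hb, hab⟩ := h δ hδ
  obtain ⟨N, hN⟩ := ENNReal.tendsto_atTop_zero.1 hb (ε / 2) hε2
  refine ⟨N, fun m hm => (hab m).trans ?_⟩
  calc b m + ENNReal.ofReal δ * C ≤ ε / 2 + ε / 2 := by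
        rw [ENNReal.ofReal_coe_nnreal]
        exact add_le_add (hN m hm) hδC.le
    _ = ε := ENNReal.add_halves ε

theorem exists_hasCompactSupport_abs_sub_le {V : Type*} [TopologicalSpace V] [RegularSpace V]
    [LocallyCompactSpace V] {φ w : V → ℝ} (hφ : Continuous φ) (hw0 : 0 ≤ w)
    (hφw : φ =o[cocompact V] w) {δ : ℝ} (hδ : 0 < δ) :
    ∃ ψ : V → ℝ, Continuous ψ ∧ HasCompactSupport ψ ∧ ∀ v, |φ v - ψ v| ≤ δ * w v := by
  obtain ⟨K, hK, hKφ⟩ := mem_cocompact.1 (hφw.def hδ)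
  obtain ⟨χ, hχK, -, hχc, hχ01⟩ :=
    exists_continuous_one_zero_of_isCompact hK isClosed_empty (Set.disjoint_empty K)
  refine ⟨χ * φ, χ.continuous.mul hφ, hχc.mul_right, fun v => ?_⟩
  have hsub : |φ v - (χ * φ) v| = (1 - χ v) * |φ v| := by
    rw [Pi.mul_apply, ← one_sub_mul, abs_mul, abs_of_nonneg (sub_nonneg.2 (hχ01 v).2)]
  rw [hsub]
  by_cases hv : v ∈ K
  · rw [hχK hv, Pi.one_apply, sub_self, zero_mul]
    exact mul_nonneg hδ.le (hw0 v)
  · have hφv : |φ v| ≤ δ * w v := by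
      simpa [Real.norm_eq_abs, abs_of_nonneg (hw0 v)] using hKφ hv
    calc (1 - χ v) * |φ v| ≤ 1 * |φ v| :=
          mul_le_mul_of_nonneg_right (by linarith [(hχ01 v).1]) (abs_nonneg _)
      _ ≤ δ * w v := by rwa [one_mul]

noncomputable def velocityAverage {X V : Type*} [MeasurableSpace V] (ν : Measure V)
    (F : X × V → ℝ) (ψ : V → ℝ) (x : X) : ℝ :=
  ∫ v, F (x, v) * ψ v ∂ν

section VelocityAverage

variable {X V : Type*} [MeasurableSpace X] [MeasurableSpace V] {μ : Measure X} {ν : Measure V}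
  [SFinite ν]

theorem aestronglyMeasurable_velocityAverage {F : X × V → ℝ}
    (hF : AEStronglyMeasurable F (μ.prod ν)) {ψ : V → ℝ} (hψ : Measurable ψ) :
    AEStronglyMeasurable (velocityAverage ν F ψ) μ :=
  (hF.mul (hψ.comp measurable_snd).aestronglyMeasurable).integral_prod_right'

variable [SFinite μ]

theorem TendstoWeaklyL1.velocityAverage {F : ℕ → X × V → ℝ} {G : X × V → ℝ}
    (h : TendstoWeaklyL1 (μ.prod ν) F G) (hF : ∀ m, Integrable (F m) (μ.prod ν))
    (hG : Integrable G (μ.prod ν)) {ψ : V → ℝ} (hψ : Measurable ψ) {B : ℝ}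
    (hB : ∀ v, |ψ v| ≤ B) :
    TendstoWeaklyL1 μ (fun m => velocityAverage ν (F m) ψ) (velocityAverage ν G ψ) := by
  rintro χ hχ ⟨D, hD⟩
  have hψχ : Measurable fun z : X × V => ψ z.2 * χ z.1 :=
    (hψ.comp measurable_snd).mul (hχ.comp measurable_fst)
  have hψχB : ∀ z : X × V, |ψ z.2 * χ z.1| ≤ B * D := fun z => by
    rw [abs_mul]
    exact mul_le_mul (hB _) (hD _) (abs_nonneg _) ((abs_nonneg _).trans (hB z.2))
  have hfubini : ∀ H : X × V → ℝ, Integrable H (μ.prod ν) →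
      ∫ z, H z * (ψ z.2 * χ z.1) ∂(μ.prod ν) =
        ∫ x, _root_.velocityAverage ν H ψ x * χ x ∂μ := by
    intro H hH
    rw [integral_prod _ (hH.mul_bdd hψχ.aestronglyMeasurable (ae_of_all _ hψχB))]
    simp only [_root_.velocityAverage, ← integral_mul_const, mul_assoc]
  simpa only [hfubini _ (hF _), hfubini G hG] using h _ hψχ ⟨B * D, hψχB⟩

theorem lintegral_enorm_velocityAverage_sub_le_mul {F : X × V → ℝ} {φ ψ w : V → ℝ}
    (hF : Integrable F (μ.prod ν)) (hF0 : 0 ≤ᵐ[μ.prod ν] F) (hφ : Measurable φ)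
    (hψ : Measurable ψ) {B : ℝ} (hψB : ∀ v, |ψ v| ≤ B) {δ : ℝ} (hδ : 0 ≤ δ)
    (hφψ : ∀ v, |φ v - ψ v| ≤ δ * w v)
    (hFw : ∫⁻ z, ENNReal.ofReal (w z.2 * F z) ∂(μ.prod ν) ≠ ∞) :
    ∫⁻ x, ‖velocityAverage ν F φ x - velocityAverage ν F ψ x‖ₑ ∂μ ≤
      ENNReal.ofReal δ * ∫⁻ z, ENNReal.ofReal (w z.2 * F z) ∂(μ.prod ν) := by
  have hFψ : Integrable (fun z => F z * ψ z.2) (μ.prod ν) :=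
    hF.mul_bdd (hψ.comp measurable_snd).aestronglyMeasurable (ae_of_all _ fun z => hψB z.2)
  have hFφψ : Integrable (fun z => F z * (φ z.2 - ψ z.2)) (μ.prod ν) :=
    integrable_mul_of_abs_le hF.1 ((hφ.sub hψ).comp measurable_snd).aestronglyMeasurable hF0 hδ
      (fun z => hφψ z.2) hFw
  have hFφ : Integrable (fun z => F z * φ z.2) (μ.prod ν) := by
    simpa only [mul_sub, sub_add_cancel] using hFφψ.fun_add hFψ
  refine le_trans ?_ (lintegral_enorm_mul_le_of_abs_le hF0 hδ fun z => hφψ z.2)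
  rw [lintegral_prod _ hFφψ.aestronglyMeasurable.enorm]
  refine lintegral_mono_ae ?_
  filter_upwards [hFφ.prod_right_ae, hFψ.prod_right_ae] with x hφx hψx
  rw [velocityAverage, velocityAverage, ← integral_sub hφx hψx]
  simpa only [mul_sub] using enorm_integral_le_lintegral_enorm _

theorem velocityAverage_ae_eq_of_tendsto {F : ℕ → X × V → ℝ} {G : X × V → ℝ}
    (hweak : TendstoWeaklyL1 (μ.prod ν) F G) (hF : ∀ m, Integrable (F m) (μ.prod ν))
    (hG : Integrable G (μ.prod ν)) {ψ : V → ℝ} (hψ : Measurable ψ) {B : ℝ}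
    (hB : ∀ v, |ψ v| ≤ B) {g : X → ℝ} (hg : Integrable g μ)
    (hFg : Tendsto (fun m => ∫ x, |velocityAverage ν (F m) ψ x - g x| ∂μ) atTop (𝓝 0)) :
    velocityAverage ν G ψ =ᵐ[μ] g := by
  have hψint : ∀ H, Integrable H (μ.prod ν) → Integrable (velocityAverage ν H ψ) μ :=
    fun H hH => (hH.mul_bdd (hψ.comp measurable_snd).aestronglyMeasurable
      (ae_of_all _ fun z => hB z.2)).integral_prod_left
  exact (hweak.velocityAverage hF hG hψ hB).ae_eq
    (tendstoWeaklyL1_of_tendsto_integral_abs_sub (fun m => hψint _ (hF m)) hg hFg) (hψint G hG) hg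

variable [TopologicalSpace V] [OpensMeasurableSpace V] [RegularSpace V] [LocallyCompactSpace V]

theorem tendsto_lintegral_enorm_velocityAverage_sub {F : ℕ → X × V → ℝ} {G : X × V → ℝ}
    (hF : ∀ m, Integrable (F m) (μ.prod ν)) (hF0 : ∀ m, 0 ≤ᵐ[μ.prod ν] F m)
    (hG : Integrable G (μ.prod ν)) (hweak : TendstoWeaklyL1 (μ.prod ν) F G)
    (havg : ∀ ψ : V → ℝ, Continuous ψ → HasCompactSupport ψ →
      ∃ g : X → ℝ, Integrable g μ ∧
        Tendsto (fun m => ∫ x, |velocityAverage ν (F m) ψ x - g x| ∂μ) atTop (𝓝 0))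
    {w : V → ℝ} (hw : Measurable w) (hw0 : 0 ≤ w) {C : ℝ≥0∞} (hC : C ≠ ∞)
    (hFw : ∀ m, ∫⁻ z, ENNReal.ofReal (w z.2 * F m z) ∂(μ.prod ν) ≤ C)
    {φ : V → ℝ} (hφ : Continuous φ) (hφw : φ =o[cocompact V] w) :
    Tendsto (fun m => ∫⁻ x, ‖velocityAverage ν (F m) φ x - velocityAverage ν G φ x‖ₑ ∂μ)
      atTop (𝓝 0) := by
  have hG0 := hweak.ae_nonneg hF0 hG
  have hGw : ∫⁻ z, ENNReal.ofReal (w z.2 * G z) ∂(μ.prod ν) ≤ C :=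
    hweak.lintegral_ofReal_mul_le hF hF0 hG hG0 (hw.comp measurable_snd) (fun z => hw0 z.2) hFw
  refine ENNReal.tendsto_atTop_zero_of_forall_le_add_mul (C := 2 * C)
    (ENNReal.mul_ne_top ENNReal.ofNat_ne_top hC) fun δ hδ => ?_
  obtain ⟨ψ, hψ, hψc, hφψ⟩ := exists_hasCompactSupport_abs_sub_le hφ hw0 hφw hδ
  obtain ⟨B, hB⟩ := hψc.exists_bound_of_continuous hψ
  have htail : ∀ H, Integrable H (μ.prod ν) → 0 ≤ᵐ[μ.prod ν] H →
      ∫⁻ z, ENNReal.ofReal (w z.2 * H z) ∂(μ.prod ν) ≤ C →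
      ∫⁻ x, ‖velocityAverage ν H φ x - velocityAverage ν H ψ x‖ₑ ∂μ ≤ ENNReal.ofReal δ * C :=
    fun H hH hH0 hHw => (lintegral_enorm_velocityAverage_sub_le_mul hH hH0 hφ.measurable
      hψ.measurable hB hδ.le hφψ (hHw.trans_lt hC.lt_top).ne).trans (mul_le_mul_right hHw _)
  obtain ⟨g, hg, hFg⟩ := havg ψ hψ hψc
  have hGg := velocityAverage_ae_eq_of_tendsto hweak hF hG hψ.measurable hB hg hFg
  have hA : ∀ H, Integrable H (μ.prod ν) → ∀ {χ : V → ℝ}, Continuous χ →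
      AEStronglyMeasurable (velocityAverage ν H χ) μ :=
    fun H hH χ hχ => aestronglyMeasurable_velocityAverage hH.1 hχ.measurable
  refine ⟨fun m => ∫⁻ x, ‖velocityAverage ν (F m) ψ x - g x‖ₑ ∂μ, ?_, fun m => ?_⟩
  · refine (ENNReal.ofReal_zero ▸ ENNReal.tendsto_ofReal hFg).congr fun m => ?_
    have hAFψ : Integrable (velocityAverage ν (F m) ψ) μ :=
      ((hF m).mul_bdd (hψ.measurable.comp measurable_snd).aestronglyMeasurable
        (ae_of_all _ fun z => hB z.2)).integral_prod_left
    simpa only [Real.norm_eq_abs, Pi.sub_apply] using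
      ofReal_integral_norm_eq_lintegral_enorm (hAFψ.sub hg)
  calc ∫⁻ x, ‖velocityAverage ν (F m) φ x - velocityAverage ν G φ x‖ₑ ∂μ
      ≤ ∫⁻ x, ‖velocityAverage ν (F m) φ x - velocityAverage ν (F m) ψ x‖ₑ ∂μ +
        (∫⁻ x, ‖velocityAverage ν (F m) ψ x - velocityAverage ν G ψ x‖ₑ ∂μ +
          ∫⁻ x, ‖velocityAverage ν G ψ x - velocityAverage ν G φ x‖ₑ ∂μ) :=
        (lintegral_enorm_sub_le_add (hA _ (hF m) hφ) (hA _ (hF m) hψ)).trans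
          (add_le_add le_rfl (lintegral_enorm_sub_le_add (hA _ (hF m) hψ) (hA G hG hψ)))
    _ ≤ ENNReal.ofReal δ * C + (∫⁻ x, ‖velocityAverage ν (F m) ψ x - g x‖ₑ ∂μ +
          ENNReal.ofReal δ * C) := by
        refine add_le_add (htail _ (hF m) (hF0 m) (hFw m)) (add_le_add (le_of_eq ?_) ?_)
        · exact lintegral_congr_ae (hGg.mono fun x hx => by simp only [hx])
        · simpa only [enorm_sub_rev] using htail G hG hG0 hGw
    _ = ∫⁻ x, ‖velocityAverage ν (F m) ψ x - g x‖ₑ ∂μ + ENNReal.ofReal δ * (2 * C) := by ring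

end VelocityAverage

theorem measurePreserving_prodAssoc_kineticMeasure (d : ℕ) (T : ℝ)
    (Ω : Set (EuclideanSpace ℝ (Fin d))) :
    MeasurePreserving MeasurableEquiv.prodAssoc
      ((baseMeasure d T Ω).prod (volume : Measure (EuclideanSpace ℝ (Fin d))))
      (kineticMeasure d T Ω) := by
  have hpre : MeasurableEquiv.prodAssoc ⁻¹' (Set.Ioo (0 : ℝ) T ×ˢ (Ω ×ˢ Set.univ)) =
      (Set.Ioo (0 : ℝ) T ×ˢ Ω) ×ˢ (Set.univ : Set (EuclideanSpace ℝ (Fin d))) := by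
    ext ⟨⟨t, x⟩, v⟩
    simp [MeasurableEquiv.prodAssoc, and_assoc]
  have h := (measurePreserving_prodAssoc (volume : Measure ℝ)
    (volume : Measure (EuclideanSpace ℝ (Fin d)))
    (volume : Measure (EuclideanSpace ℝ (Fin d)))).restrict_preimage_emb
    MeasurableEquiv.prodAssoc.measurableEmbedding (Set.Ioo (0 : ℝ) T ×ˢ (Ω ×ˢ Set.univ))
  rw [hpre, ← Measure.restrict_prod_eq_prod_univ] at h
  simpa only [baseMeasure, kineticMeasure, Measure.volume_eq_prod] using h

theorem velAvg_eq_velocityAverage {d : ℕ}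
    (f : ℝ × EuclideanSpace ℝ (Fin d) × EuclideanSpace ℝ (Fin d) → ℝ)
    (ψ : EuclideanSpace ℝ (Fin d) → ℝ) :
    velAvg f ψ = velocityAverage volume (f ∘ MeasurableEquiv.prodAssoc) ψ :=
  rfl

theorem subcubic_velocity_averaging_general
    (d : ℕ) (T : ℝ)
    (Ω : Set (EuclideanSpace ℝ (Fin d)))
    (f : ℕ → ℝ × EuclideanSpace ℝ (Fin d) × EuclideanSpace ℝ (Fin d) → ℝ)
    (flim : ℝ × EuclideanSpace ℝ (Fin d) × EuclideanSpace ℝ (Fin d) → ℝ)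
    (hf_nonneg : ∀ m q, 0 ≤ f m q)
    (hf_int : ∀ m, Integrable (f m) (kineticMeasure d T Ω))
    (hflim_int : Integrable flim (kineticMeasure d T Ω))
    -- weak convergence in L¹ of `f_m` to `flim`
    (hweak : ∀ φ : ℝ × EuclideanSpace ℝ (Fin d) × EuclideanSpace ℝ (Fin d) → ℝ,
      Measurable φ → (∃ C : ℝ, ∀ q, |φ q| ≤ C) →
      Tendsto (fun m => ∫ q, f m q * φ q ∂(kineticMeasure d T Ω)) atTop
        (𝓝 (∫ q, flim q * φ q ∂(kineticMeasure d T Ω))))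
    -- convergence in `L¹((0,T)×Ω)` of the compactly supported velocity averages
    (havg : ∀ ψ : EuclideanSpace ℝ (Fin d) → ℝ, Continuous ψ → HasCompactSupport ψ →
      ∃ g : ℝ × EuclideanSpace ℝ (Fin d) → ℝ, Integrable g (baseMeasure d T Ω) ∧
        Tendsto (fun m => ∫ p, |velAvg (f m) ψ p - g p| ∂(baseMeasure d T Ω)) atTop (𝓝 0))
    -- uniform bound on the third velocity moments
    (hmoment : ∃ C : ℝ, ∀ m,
      (∫⁻ q, ENNReal.ofReal (‖q.2.2‖ ^ 3 * f m q) ∂(kineticMeasure d T Ω)) ≤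
        ENNReal.ofReal C) :
    ∀ φ : EuclideanSpace ℝ (Fin d) → ℝ, Continuous φ →
      Tendsto (fun v => |φ v| / (1 + ‖v‖) ^ 3) (cocompact (EuclideanSpace ℝ (Fin d)))
        (𝓝 0) →
      Tendsto (fun m => ∫⁻ p, ENNReal.ofReal |velAvg (f m) φ p - velAvg flim φ p|
          ∂(baseMeasure d T Ω)) atTop (𝓝 0) := by
  intro φ hφ hφ_growth
  have : SFinite (baseMeasure d T Ω) := by unfold baseMeasure; infer_instance
  have he := measurePreserving_prodAssoc_kineticMeasure d T Ω
  have hemb := (MeasurableEquiv.prodAssoc (α := ℝ) (β := EuclideanSpace ℝ (Fin d))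
    (γ := EuclideanSpace ℝ (Fin d))).measurableEmbedding
  obtain ⟨C, hC⟩ := hmoment
  obtain ⟨M, hM⟩ := TendstoWeaklyL1.exists_integral_le hweak
  have hweight : ∀ m, ∫⁻ q, ENNReal.ofReal ((1 + ‖q.2.2‖) ^ 3 * f m q) ∂(kineticMeasure d T Ω) ≤
      4 * ENNReal.ofReal M + 4 * ENNReal.ofReal C := fun m => by
    refine (lintegral_ofReal_one_add_pow_three_mul_le (hf_int m).aemeasurable
      (ae_of_all _ (hf_nonneg m)) fun q => norm_nonneg q.2.2).trans (add_le_add ?_ ?_)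
    · rw [← ofReal_integral_eq_lintegral_ofReal (hf_int m) (ae_of_all _ (hf_nonneg m))]
      exact mul_le_mul_right (ENNReal.ofReal_le_ofReal (hM m)) _
    · exact mul_le_mul_right (hC m) _
  have hφw : φ =o[cocompact _] fun v => (1 + ‖v‖) ^ 3 :=
    Asymptotics.isLittleO_abs_left.1 <| (Asymptotics.isLittleO_iff_tendsto'
      (Eventually.of_forall fun v hv => absurd hv (by positivity))).2 hφ_growth
  simpa only [Real.enorm_eq_ofReal_abs, ← velAvg_eq_velocityAverage] using
    tendsto_lintegral_enorm_velocityAverage_sub (F := fun m => f m ∘ MeasurableEquiv.prodAssoc)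
      (fun m => (he.integrable_comp_emb hemb).2 (hf_int m))
      (fun m => ae_of_all _ fun z => hf_nonneg m _)
      ((he.integrable_comp_emb hemb).2 hflim_int)
      (TendstoWeaklyL1.comp_measurableEquiv he hweak) havg (by fun_prop) (fun v => by positivity)
      (by finiteness) (fun m => (he.lintegral_comp_emb hemb _).trans_le (hweight m)) hφ hφw

/-- **Velocity averaging against subcubic test functions under third-moment bounds.**
If `f_m ⇀ f` weakly in `L¹((0,T)×Ω×ℝ^d)`, velocity averages against continuous compactly
supported test functions converge in `L¹((0,T)×Ω)`, and the third velocity moments of `f_m`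
are uniformly bounded, then for every continuous `φ` of subcubic growth the averages
`∫ f_m φ dv` converge to `∫ f φ dv` in `L¹((0,T)×Ω)`. -/
theorem subcubic_velocity_averaging
    (d : ℕ) (hd : 1 ≤ d) (T : ℝ) (hT : 0 < T)
    (Ω : Set (EuclideanSpace ℝ (Fin d))) (hΩ : IsOpen Ω)
    (f : ℕ → ℝ × EuclideanSpace ℝ (Fin d) × EuclideanSpace ℝ (Fin d) → ℝ)
    (flim : ℝ × EuclideanSpace ℝ (Fin d) × EuclideanSpace ℝ (Fin d) → ℝ)
    (hf_meas : ∀ m, Measurable (f m))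
    (hf_nonneg : ∀ m q, 0 ≤ f m q)
    (hf_int : ∀ m, Integrable (f m) (kineticMeasure d T Ω))
    (hflim_meas : Measurable flim)
    (hflim_int : Integrable flim (kineticMeasure d T Ω))
    -- weak convergence in L¹ of `f_m` to `flim`
    (hweak : ∀ φ : ℝ × EuclideanSpace ℝ (Fin d) × EuclideanSpace ℝ (Fin d) → ℝ,
      Measurable φ → (∃ C : ℝ, ∀ q, |φ q| ≤ C) →
      Tendsto (fun m => ∫ q, f m q * φ q ∂(kineticMeasure d T Ω)) atTop
        (𝓝 (∫ q, flim q * φ q ∂(kineticMeasure d T Ω))))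
    -- convergence in `L¹((0,T)×Ω)` of the compactly supported velocity averages
    (havg : ∀ ψ : EuclideanSpace ℝ (Fin d) → ℝ, Continuous ψ → HasCompactSupport ψ →
      ∃ g : ℝ × EuclideanSpace ℝ (Fin d) → ℝ, Integrable g (baseMeasure d T Ω) ∧
        Tendsto (fun m => ∫ p, |velAvg (f m) ψ p - g p| ∂(baseMeasure d T Ω)) atTop (𝓝 0))
    -- uniform bound on the third velocity moments
    (hmoment : ∃ C : ℝ, ∀ m,
      (∫⁻ q, ENNReal.ofReal (‖q.2.2‖ ^ 3 * f m q) ∂(kineticMeasure d T Ω)) ≤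
        ENNReal.ofReal C) :
    ∀ φ : EuclideanSpace ℝ (Fin d) → ℝ, Continuous φ →
      Tendsto (fun v => |φ v| / (1 + ‖v‖) ^ 3) (cocompact (EuclideanSpace ℝ (Fin d)))
        (𝓝 0) →
      Tendsto (fun m => ∫⁻ p, ENNReal.ofReal |velAvg (f m) φ p - velAvg flim φ p|
          ∂(baseMeasure d T Ω)) atTop (𝓝 0) :=
  subcubic_velocity_averaging_general d T Ω f flim hf_nonneg hf_int hflim_int hweak havg hmoment
end

section
/- Approximation of physical initial data by continuous compactly supported functions preserving mass, energy, and entropy (Lemma A.1 of the paper). Let d ≥ 1 and let Ω ⊆ ℝ^d be a bounded open set. Let f⁰ : Ω×ℝ^d → [0,∞) be measurable with ∫_{Ω×ℝ^d} (1 + |v|² + |log f⁰(x,v)|) f⁰(x,v) dx dv < ∞ (with the convention 0·log 0 = 0). Then there exists a sequence (f_n⁰) of nonnegative continuous functions on ℝ^d×ℝ^d, each with compact support contained in the closure of Ω times ℝ^d, such that: f_n⁰ → f⁰ in L¹(Ω×ℝ^d); ∫_{Ω×ℝ^d} f_n⁰ log f_n⁰ dx dv → ∫_{Ω×ℝ^d}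 f⁰ log f⁰ dx dv; and ∫_{Ω×ℝ^d} |v|² f_n⁰ dx dv → ∫_{Ω×ℝ^d} |v|² f⁰ dx dv. -/
/-!
Truncate: with `K` a compact exhaustion of the phase space `Z` and `S = Ω × ℝ^d`, the functions
`f⁰ · 1_{A_k}`, `A_k = {z ∈ S ∩ int K_k | f⁰ z ≤ k}`, converge to `f⁰` in `L¹`, entropy and energy
by dominated convergence. A single truncation takes values in `[0, k]` and vanishes outside the
open set `U_k = S ∩ int K_k` of finite measure, on which the weight `|v|²` is bounded. Approximate
it in `L¹` by continuous compactly supported functions, pass to an a.e. convergent subsequence,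
clip to `[0, k]` and multiply by continuous cutoffs increasing to `1_{U_k}`: the resulting
approximants converge a.e. and are uniformly bounded on `U_k`, so bounded convergence carries all
three quantities to the limit. A diagonal argument, phrased as closure of the image in `ℝ³`,
finishes.
-/

open MeasureTheory Filter Topology
open scoped ENNReal

namespace MeasureTheory

variable {Z : Type*} [MeasurableSpace Z] {μ : Measure Z}

theorem tendsto_integral_comp_indicator {A : ℕ → Set Z} (hA : Monotone A)
    (hAm : ∀ k, MeasurableSet (A k)) (hcov : ∀ᵐ z ∂μ, ∃ k, z ∈ A k) {G : Z → ℝ → ℝ}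
    {f : Z → ℝ} (hGf : Integrable (fun z => G z (f z)) μ)
    (hG0 : Integrable (fun z => G z 0) μ) :
    Tendsto (fun k => ∫ z, G z ((A k).indicator f z) ∂μ) atTop (𝓝 (∫ z, G z (f z) ∂μ)) := by
  classical
  have hpiece : ∀ k, (fun z => G z ((A k).indicator f z)) =
      (A k).piecewise (fun z => G z (f z)) (fun z => G z 0) := fun k => by
    ext z
    by_cases hz : z ∈ A k <;> simp [hz]
  refine tendsto_integral_of_dominated_convergence (fun z => |G z (f z)| + |G z 0|)
    (fun k => ?_) (hGf.abs.add hG0.abs) (fun k => .of_forall fun z => ?_) ?_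
  · rw [hpiece]
    exact (Integrable.piecewise (hAm k) hGf.integrableOn hG0.integrableOn).aestronglyMeasurable
  · by_cases hz : z ∈ A k <;> simp [hz]
  · filter_upwards [hcov] with z ⟨k₀, hk₀⟩
    refine tendsto_const_nhds.congr' ?_
    filter_upwards [eventually_ge_atTop k₀] with k hk
    rw [Set.indicator_of_mem (hA hk hk₀)]

theorem tendsto_integral_comp_of_ae_tendsto_of_support_subset {U : Set Z}
    (hUm : MeasurableSet U) (hμU : μ U ≠ ∞) {G : Z → ℝ → ℝ} (hG : ∀ z, Continuous (G z))
    (hG0 : Integrable (fun z => G z 0) μ) {u : ℕ → Z → ℝ} {v : Z → ℝ}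
    (hmeas : ∀ n, AEStronglyMeasurable (fun z => G z (u n z)) μ)
    (huU : ∀ n, Function.support (u n) ⊆ U) {B : ℝ}
    (hB : ∀ n, ∀ z ∈ U, |G z (u n z)| ≤ B + |G z 0|)
    (hlim : ∀ᵐ z ∂μ, Tendsto (u · z) atTop (𝓝 (v z))) :
    Tendsto (fun n => ∫ z, G z (u n z) ∂μ) atTop (𝓝 (∫ z, G z (v z) ∂μ)) := by
  refine tendsto_integral_of_dominated_convergence
    (fun z => U.indicator (fun _ => B) z + |G z 0|) hmeas
    (((integrable_indicator_iff hUm).2 (integrableOn_const hμU)).add hG0.abs)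
    (fun n => .of_forall fun z => ?_) (hlim.mono fun z hz => ((hG z).tendsto _).comp hz)
  by_cases hz : z ∈ U
  · simpa [hz] using hB n z hz
  · simp [hz, Function.notMem_support.1 fun h => hz (huU n h)]

theorem integrable_mass_entropy_energy_of_lintegral_lt_top {f w : Z → ℝ} (hf : Measurable f)
    (hf0 : ∀ z, 0 ≤ f z) (hw : Measurable w) (hw0 : ∀ z, 0 ≤ w z)
    (hfin : ∫⁻ z, ENNReal.ofReal ((1 + w z + |Real.log (f z)|) * f z) ∂μ < ∞) :
    Integrable f μ ∧ Integrable (fun z => f z * Real.log (f z)) μ ∧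
      Integrable (fun z => w z * f z) μ := by
  have hweight : ∀ z, 1 ≤ 1 + w z + |Real.log (f z)| := fun z => by
    linarith [hw0 z, abs_nonneg (Real.log (f z))]
  have hW : Integrable (fun z => (1 + w z + |Real.log (f z)|) * f z) μ :=
    ⟨(by fun_prop : Measurable _).aestronglyMeasurable, (hasFiniteIntegral_iff_ofReal
      (.of_forall fun z => mul_nonneg (zero_le_one.trans (hweight z)) (hf0 z))).2 hfin⟩
  have hle : ∀ {F : Z → ℝ}, Measurable F →
      (∀ z, |F z| ≤ (1 + w z + |Real.log (f z)|) * f z) → Integrable F μ :=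
    fun hF hFle => hW.mono' hF.aestronglyMeasurable (.of_forall hFle)
  refine ⟨hle hf fun z => ?_, hle (by fun_prop) fun z => ?_, hle (by fun_prop) fun z => ?_⟩
  · rw [abs_of_nonneg (hf0 z)]
    nlinarith [hw0 z, hf0 z, abs_nonneg (Real.log (f z))]
  · rw [abs_mul, abs_of_nonneg (hf0 z)]
    nlinarith [hw0 z, hf0 z, abs_nonneg (Real.log (f z))]
  · rw [abs_of_nonneg (mul_nonneg (hw0 z) (hf0 z))]
    nlinarith [hw0 z, hf0 z, abs_nonneg (Real.log (f z))]

theorem Integrable.exists_seq_hasCompactSupport_ae_tendsto [TopologicalSpace Z] [NormalSpace Z]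
    [R1Space Z] [WeaklyLocallyCompactSpace Z] [BorelSpace Z] [μ.Regular] {f : Z → ℝ}
    (hf : Integrable f μ) :
    ∃ g : ℕ → Z → ℝ, (∀ n, Continuous (g n)) ∧ (∀ n, HasCompactSupport (g n)) ∧
      ∀ᵐ z ∂μ, Tendsto (g · z) atTop (𝓝 (f z)) := by
  have hε : ∀ n : ℕ, (n : ℝ≥0∞)⁻¹ ≠ 0 := fun n =>
    ENNReal.inv_ne_zero.2 (ENNReal.natCast_ne_top n)
  choose g hgc hgf hg _ using fun n => (memLp_one_iff_integrable.2 hf)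
    |>.exists_hasCompactSupport_eLpNorm_sub_le ENNReal.one_ne_top (hε n)
  have hL1 : Tendsto (fun n => eLpNorm (g n - f) 1 μ) atTop (𝓝 0) :=
    tendsto_of_tendsto_of_tendsto_of_le_of_le tendsto_const_nhds
      ENNReal.tendsto_inv_nat_nhds_zero (fun n => zero_le)
      fun n => (eLpNorm_sub_comm _ _ _ _).trans_le (hgf n)
  obtain ⟨ns, -, hns⟩ := (tendstoInMeasure_of_tendsto_eLpNorm one_ne_zero
    (fun n => (hg n).aestronglyMeasurable) hf.aestronglyMeasurable hL1).exists_seq_tendsto_ae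
  exact ⟨fun n => g (ns n), fun n => hg (ns n), fun n => hgc (ns n), hns⟩

end MeasureTheory

theorem IsOpen.exists_seq_continuous_tendsto_one {Z : Type*} [TopologicalSpace Z]
    [PerfectlyNormalSpace Z] {U : Set Z} (hU : IsOpen U) :
    ∃ χ : ℕ → Z → ℝ, (∀ n, Continuous (χ n)) ∧ (∀ n z, χ n z ∈ Set.Icc 0 1) ∧
      (∀ n, Function.support (χ n) ⊆ U) ∧ ∀ z ∈ U, Tendsto (χ · z) atTop (𝓝 1) := by
  -- `φ` vanishes exactly off `U`, so `min 1 (n φ)` increases to the indicator of `U`.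
  obtain ⟨φ, hφ, hφ01⟩ :=
    perfectlyNormalSpace_iff_forall_isClosed_preimage_zero.1 ‹_› _ hU.isClosed_compl
  have hpos : ∀ z ∈ U, 0 < φ z := fun z hz =>
    (hφ01 z).1.lt_of_ne fun h => (hφ.superset (Eq.symm h : φ z = 0)) hz
  refine ⟨fun n z => min 1 (n * φ z), fun n => by fun_prop, fun n z =>
    ⟨le_min zero_le_one (mul_nonneg n.cast_nonneg (hφ01 z).1), min_le_left _ _⟩,
    fun n z hz => ?_, fun z hz => ?_⟩
  · by_contra hzU
    have : φ z = 0 := hφ.subset hzU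
    simp [this] at hz
  · refine tendsto_const_nhds.congr' ?_
    filter_upwards [(tendsto_natCast_atTop_atTop.atTop_mul_const (hpos z hz)).eventually_ge_atTop 1]
      with n hn
    exact (min_eq_left hn).symm

section

variable {Z : Type*} [MeasurableSpace Z]

noncomputable def distEntropyEnergy (μ : Measure Z) (f w g : Z → ℝ) : ℝ × ℝ × ℝ :=
  (∫ z, |g z - f z| ∂μ, ∫ z, g z * Real.log (g z) ∂μ, ∫ z, w z * g z ∂μ)

theorem tendsto_distEntropyEnergy_indicator {μ : Measure Z} {A : ℕ → Set Z} (hA : Monotone A)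
    (hAm : ∀ k, MeasurableSet (A k)) (hcov : ∀ᵐ z ∂μ, ∃ k, z ∈ A k) {f w : Z → ℝ}
    (hf : Integrable f μ) (hent : Integrable (fun z => f z * Real.log (f z)) μ)
    (hwf : Integrable (fun z => w z * f z) μ) :
    Tendsto (fun k => distEntropyEnergy μ f w ((A k).indicator f)) atTop
      (𝓝 (distEntropyEnergy μ f w f)) :=
  .prodMk_nhds
    (tendsto_integral_comp_indicator hA hAm hcov (G := fun z t => |t - f z|) (by simp)
      (by simpa using hf.abs))
    (.prodMk_nhds
      (tendsto_integral_comp_indicator hA hAm hcov (G := fun _ t => t * Real.log t) hent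
        (by simp))
      (tendsto_integral_comp_indicator hA hAm hcov (G := fun z t => w z * t) hwf (by simp)))

variable [TopologicalSpace Z] [PerfectlyNormalSpace Z] [R1Space Z] [WeaklyLocallyCompactSpace Z]
  [BorelSpace Z] {μ : Measure Z} [μ.Regular]

theorem MeasureTheory.Integrable.exists_seq_continuous_ae_tendsto_of_support_subset
    {h : Z → ℝ} (hh : Integrable h μ) {k : ℝ} (hhk : ∀ z, h z ∈ Set.Icc 0 k) {U : Set Z}
    (hU : IsOpen U) (hhU : Function.support h ⊆ U) :
    ∃ g : ℕ → Z → ℝ, (∀ n, Continuous (g n)) ∧ (∀ n, HasCompactSupport (g n)) ∧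
      (∀ n, Function.support (g n) ⊆ U) ∧ (∀ n z, g n z ∈ Set.Icc 0 k) ∧
      ∀ᵐ z ∂μ, Tendsto (g · z) atTop (𝓝 (h z)) := by
  obtain ⟨g, hg, hgc, hgh⟩ := hh.exists_seq_hasCompactSupport_ae_tendsto
  obtain ⟨χ, hχ, hχ01, hχU, hχ1⟩ := hU.exists_seq_continuous_tendsto_one
  set clip : ℝ → ℝ := fun t => max 0 (min t k)
  have hclip : Continuous clip := by fun_prop
  have hclip_h : ∀ z, clip (h z) = h z := fun z => by
    simp only [clip, min_eq_left (hhk z).2, max_eq_right (hhk z).1]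
  refine ⟨fun n z => χ n z * clip (g n z), fun n => (hχ n).mul (hclip.comp (hg n)),
    fun n => HasCompactSupport.mul_left (f := χ n)
      ((hgc n).comp_left (g := clip) (by simp [clip])),
    fun n z hz => hχU n (left_ne_zero_of_mul hz), fun n z => ?_, ?_⟩
  · have hk : 0 ≤ k := (hhk z).1.trans (hhk z).2
    refine ⟨mul_nonneg (hχ01 n z).1 (le_max_left _ _), ?_⟩
    calc χ n z * clip (g n z) ≤ 1 * k :=
          mul_le_mul (hχ01 n z).2 (max_le hk (min_le_right _ _)) (le_max_left _ _) zero_le_one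
      _ = k := one_mul k
  · filter_upwards [hgh] with z hz
    have hclipz : Tendsto (fun n => clip (g n z)) atTop (𝓝 (h z)) :=
      hclip_h z ▸ (hclip.tendsto _).comp hz
    by_cases hzU : z ∈ U
    · simpa using (hχ1 z hzU).mul hclipz
    · have : h z = 0 := Function.notMem_support.1 fun h' => hzU (hhU h')
      simp only [Function.notMem_support.1 fun h' => hzU (hχU _ h'), zero_mul, this]
      exact tendsto_const_nhds

theorem distEntropyEnergy_mem_closure {ν : Measure Z} (hνμ : ν ≪ μ) {f w : Z → ℝ}
    (hf : Integrable f ν) (hw : Continuous w) {U : Set Z} (hU : IsOpen U) (hνU : ν U ≠ ∞)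
    {c : ℝ} (hwU : ∀ z ∈ U, |w z| ≤ c) {h : Z → ℝ} (hh : Integrable h μ) {k : ℝ}
    (hhk : ∀ z, h z ∈ Set.Icc 0 k) (hhU : Function.support h ⊆ U) :
    distEntropyEnergy ν f w h ∈ closure (distEntropyEnergy ν f w ''
      {g | Continuous g ∧ HasCompactSupport g ∧ Function.support g ⊆ U ∧
        ∀ z, g z ∈ Set.Icc 0 k}) := by
  obtain ⟨g, hg, hgc, hgU, hgk, hgh⟩ :=
    hh.exists_seq_continuous_ae_tendsto_of_support_subset hhk hU hhU
  obtain ⟨M, hM⟩ := (isCompact_Icc (a := 0) (b := k)).exists_bound_of_continuousOn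
    Real.continuous_mul_log.continuousOn
  have hlim := hνμ.ae_le hgh
  refine mem_closure_of_tendsto (f := fun n => distEntropyEnergy ν f w (g n)) (b := atTop)
    (.prodMk_nhds ?_ (.prodMk_nhds ?_ ?_))
    (.of_forall fun n => ⟨g n, ⟨hg n, hgc n, hgU n, hgk n⟩, rfl⟩)
  · refine tendsto_integral_comp_of_ae_tendsto_of_support_subset hU.measurableSet hνU
      (G := fun z t => |t - f z|) (fun z => by fun_prop) (by simpa using hf.abs)
      (fun n => ((hg n).aestronglyMeasurable.sub hf.1).norm) hgU (B := k)
      (fun n z _ => ?_) hlim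
    simp only [zero_sub, abs_neg, abs_abs]
    refine (abs_sub _ _).trans (add_le_add_left ?_ _)
    rw [abs_of_nonneg (hgk n z).1]
    exact (hgk n z).2
  · refine tendsto_integral_comp_of_ae_tendsto_of_support_subset hU.measurableSet hνU
      (G := fun _ t => t * Real.log t) (fun _ => by fun_prop) (by simp)
      (fun n => (Real.continuous_mul_log.comp (hg n)).aestronglyMeasurable) hgU (B := M)
      (fun n z _ => ?_) hlim
    simpa using hM _ (hgk n z)
  · refine tendsto_integral_comp_of_ae_tendsto_of_support_subset hU.measurableSet hνU
      (G := fun z t => w z * t) (fun _ => by fun_prop) (by simp)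
      (fun n => (hw.mul (hg n)).aestronglyMeasurable) hgU (B := c * k) (fun n z hz => ?_) hlim
    simp only [mul_zero, abs_zero, add_zero, abs_mul]
    rw [abs_of_nonneg (hgk n z).1]
    exact mul_le_mul (hwU z hz) (hgk n z).2 (hgk n z).1 ((abs_nonneg _).trans (hwU z hz))

theorem distEntropyEnergy_self_mem_closure [SigmaCompactSpace Z] {S : Set Z} (hS : IsOpen S)
    {f w : Z → ℝ} (hfm : Measurable f) (hf0 : ∀ z, 0 ≤ f z) (hw : Continuous w)
    (hf : IntegrableOn f S μ) (hent : IntegrableOn (fun z => f z * Real.log (f z)) S μ)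
    (hwf : IntegrableOn (fun z => w z * f z) S μ) :
    distEntropyEnergy (μ.restrict S) f w f ∈ closure (distEntropyEnergy (μ.restrict S) f w ''
      {g | Continuous g ∧ (∀ z, 0 ≤ g z) ∧ HasCompactSupport g ∧ Function.support g ⊆ S}) := by
  let K := CompactExhaustion.choice Z
  set U : ℕ → Set Z := fun k => S ∩ interior (K k)
  set A : ℕ → Set Z := fun k => U k ∩ {z | f z ≤ k}
  have hU : ∀ k, IsOpen (U k) := fun k => hS.inter isOpen_interior
  have hA : Monotone A := fun i j hij =>
    Set.inter_subset_inter (Set.inter_subset_inter_right _ (interior_mono (K.subset hij)))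
      fun z (hz : f z ≤ i) => hz.trans (Nat.cast_le.2 hij)
  have hAm : ∀ k, MeasurableSet (A k) := fun k =>
    (hU k).measurableSet.inter (measurableSet_le hfm measurable_const)
  have hcov : ∀ᵐ z ∂μ.restrict S, ∃ k, z ∈ A k := by
    filter_upwards [ae_restrict_mem hS.measurableSet] with z hz
    obtain ⟨k₁, hk₁⟩ := K.exists_mem_nhds z
    obtain ⟨k₂, hk₂⟩ := exists_nat_ge (f z)
    exact ⟨max k₁ k₂, ⟨hz, interior_mono (K.subset (le_max_left _ _))
      (mem_interior_iff_mem_nhds.2 hk₁)⟩, hk₂.trans (Nat.cast_le.2 (le_max_right _ _))⟩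
  refine closure_closure (X := ℝ × ℝ × ℝ) ▸ mem_closure_of_tendsto
    (tendsto_distEntropyEnergy_indicator hA hAm hcov hf hent hwf) (.of_forall fun k => ?_)
  obtain ⟨c, hc⟩ := (K.isCompact k).exists_bound_of_continuousOn hw.continuousOn
  refine closure_mono (Set.image_mono ?_) (distEntropyEnergy_mem_closure (μ := μ)
    (Measure.absolutelyContinuous_of_le Measure.restrict_le_self) hf hw (hU k) ?_ (c := c)
    (fun z hz => hc z (interior_subset hz.2)) ((integrable_indicator_iff (hAm k)).2
      (hf.mono_set fun z hz => hz.1.1)) (k := k) (fun z => ?_)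
    (Set.support_indicator_subset.trans fun z hz => hz.1))
  · exact fun g ⟨hg, hgc, hgU, hgk⟩ =>
      ⟨hg, fun z => (hgk z).1, hgc, hgU.trans Set.inter_subset_left⟩
  · exact ne_top_of_le_ne_top (K.isCompact k).measure_lt_top.ne
      ((Measure.restrict_le_self _).trans
        (measure_mono (Set.inter_subset_right.trans interior_subset)))
  · by_cases hz : z ∈ A k
    · simpa [hz] using ⟨hf0 z, hz.2⟩
    · simp [hz]

theorem exists_seq_tendsto_distEntropyEnergy [SigmaCompactSpace Z] {S : Set Z} (hS : IsOpen S)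
    {f w : Z → ℝ} (hfm : Measurable f) (hf0 : ∀ z, 0 ≤ f z) (hw : Continuous w)
    (hf : IntegrableOn f S μ) (hent : IntegrableOn (fun z => f z * Real.log (f z)) S μ)
    (hwf : IntegrableOn (fun z => w z * f z) S μ) :
    ∃ g : ℕ → Z → ℝ, (∀ n, Continuous (g n)) ∧ (∀ n z, 0 ≤ g n z) ∧
      (∀ n, HasCompactSupport (g n)) ∧ (∀ n, Function.support (g n) ⊆ S) ∧
      Tendsto (fun n => distEntropyEnergy (μ.restrict S) f w (g n)) atTop
        (𝓝 (distEntropyEnergy (μ.restrict S) f w f)) := by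
  obtain ⟨x, hx, hlim⟩ := mem_closure_iff_seq_limit.1
    (distEntropyEnergy_self_mem_closure hS hfm hf0 hw hf hent hwf)
  choose g hg hgx using hx
  exact ⟨g, fun n => (hg n).1, fun n => (hg n).2.1, fun n => (hg n).2.2.1,
    fun n => (hg n).2.2.2, by simpa only [hgx] using hlim⟩

end

theorem approximation_of_physical_initial_data_general
    (d : ℕ)
    (Ω : Set (EuclideanSpace ℝ (Fin d))) (hΩ_open : IsOpen Ω)
    (f0 : EuclideanSpace ℝ (Fin d) × EuclideanSpace ℝ (Fin d) → ℝ)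
    (hf0_meas : Measurable f0)
    (hf0_nonneg : ∀ q, 0 ≤ f0 q)
    (hf0_phys : (∫⁻ q in Ω ×ˢ (Set.univ : Set (EuclideanSpace ℝ (Fin d))),
        ENNReal.ofReal ((1 + ‖q.2‖ ^ 2 + |Real.log (f0 q)|) * f0 q)) < ⊤) :
    ∃ fn : ℕ → EuclideanSpace ℝ (Fin d) × EuclideanSpace ℝ (Fin d) → ℝ,
      (∀ n, Continuous (fn n)) ∧
      (∀ n q, 0 ≤ fn n q) ∧
      (∀ n, HasCompactSupport (fn n)) ∧
      (∀ n, Function.support (fn n) ⊆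
        (closure Ω) ×ˢ (Set.univ : Set (EuclideanSpace ℝ (Fin d)))) ∧
      Tendsto (fun n =>
          ∫ q in Ω ×ˢ (Set.univ : Set (EuclideanSpace ℝ (Fin d))), |fn n q - f0 q|)
        atTop (𝓝 0) ∧
      Tendsto (fun n =>
          ∫ q in Ω ×ˢ (Set.univ : Set (EuclideanSpace ℝ (Fin d))),
            fn n q * Real.log (fn n q))
        atTop (𝓝 (∫ q in Ω ×ˢ (Set.univ : Set (EuclideanSpace ℝ (Fin d))),
          f0 q * Real.log (f0 q))) ∧
      Tendsto (fun n =>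
          ∫ q in Ω ×ˢ (Set.univ : Set (EuclideanSpace ℝ (Fin d))), ‖q.2‖ ^ 2 * fn n q)
        atTop (𝓝 (∫ q in Ω ×ˢ (Set.univ : Set (EuclideanSpace ℝ (Fin d))),
          ‖q.2‖ ^ 2 * f0 q)) := by
  obtain ⟨hf, hent, hwf⟩ := integrable_mass_entropy_energy_of_lintegral_lt_top
    (μ := volume.restrict (Ω ×ˢ Set.univ)) (w := fun q => ‖q.2‖ ^ 2) hf0_meas hf0_nonneg
    (by fun_prop) (fun q => sq_nonneg _) hf0_phys
  obtain ⟨g, hg, hg0, hgc, hgS, hlim⟩ := exists_seq_tendsto_distEntropyEnergy (μ := volume)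
    (hΩ_open.prod isOpen_univ) hf0_meas hf0_nonneg (by fun_prop) hf hent hwf
  refine ⟨g, hg, hg0, hgc, fun n => (hgS n).trans (Set.prod_mono subset_closure subset_rfl),
    ?_, hlim.snd_nhds.fst_nhds, hlim.snd_nhds.snd_nhds⟩
  simpa [distEntropyEnergy] using hlim.fst_nhds

/-- **Lemma A.1: approximation of physical initial data.**
If `Ω ⊆ ℝ^d` is bounded and open and `f⁰ ≥ 0` satisfies
`∫_{Ω×ℝ^d} (1 + |v|² + |log f⁰|) f⁰ < ∞`, then there is a sequence of nonnegative
continuous compactly supported functions, supported in `closure Ω × ℝ^d`, converging to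
`f⁰` in `L¹(Ω×ℝ^d)` together with their entropies and kinetic energies. -/
theorem approximation_of_physical_initial_data
    (d : ℕ) (hd : 1 ≤ d)
    (Ω : Set (EuclideanSpace ℝ (Fin d))) (hΩ_open : IsOpen Ω)
    (hΩ_bdd : Bornology.IsBounded Ω)
    (f0 : EuclideanSpace ℝ (Fin d) × EuclideanSpace ℝ (Fin d) → ℝ)
    (hf0_meas : Measurable f0)
    (hf0_nonneg : ∀ q, 0 ≤ f0 q)
    (hf0_phys : (∫⁻ q in Ω ×ˢ (Set.univ : Set (EuclideanSpace ℝ (Fin d))),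
        ENNReal.ofReal ((1 + ‖q.2‖ ^ 2 + |Real.log (f0 q)|) * f0 q)) < ⊤) :
    ∃ fn : ℕ → EuclideanSpace ℝ (Fin d) × EuclideanSpace ℝ (Fin d) → ℝ,
      (∀ n, Continuous (fn n)) ∧
      (∀ n q, 0 ≤ fn n q) ∧
      (∀ n, HasCompactSupport (fn n)) ∧
      (∀ n, Function.support (fn n) ⊆
        (closure Ω) ×ˢ (Set.univ : Set (EuclideanSpace ℝ (Fin d)))) ∧
      Tendsto (fun n =>
          ∫ q in Ω ×ˢ (Set.univ : Set (EuclideanSpace ℝ (Fin d))), |fn n q - f0 q|)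
        atTop (𝓝 0) ∧
      Tendsto (fun n =>
          ∫ q in Ω ×ˢ (Set.univ : Set (EuclideanSpace ℝ (Fin d))),
            fn n q * Real.log (fn n q))
        atTop (𝓝 (∫ q in Ω ×ˢ (Set.univ : Set (EuclideanSpace ℝ (Fin d))),
          f0 q * Real.log (f0 q))) ∧
      Tendsto (fun n =>
          ∫ q in Ω ×ˢ (Set.univ : Set (EuclideanSpace ℝ (Fin d))), ‖q.2‖ ^ 2 * fn n q)
        atTop (𝓝 (∫ q in Ω ×ˢ (Set.univ : Set (EuclideanSpace ℝ (Fin d))),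
          ‖q.2‖ ^ 2 * f0 q)) :=
  approximation_of_physical_initial_data_general d Ω hΩ_open f0 hf0_meas hf0_nonneg hf0_phys
end

section
/- Uniform smallness of the negative part of the entropy on large-velocity tails (estimate (eq: FLOGF) proved in Appendix A of the paper). Let d ≥ 1 and let Ω ⊆ ℝ^d be a measurable set of finite Lebesgue measure. Let ζ ∈ (d/(d+2), 1). Then there exists a constant C > 0, depending only on d and ζ, such that for every measurable f : Ω×ℝ^d → [0,∞) with M := ∫_{Ω×ℝ^d} (1+|v|²) f(x,v) dx dv < ∞ and every R ≥ 0, one has ∫_{Ω×{|v|≥R}} |min{f(x,v) log f(x,v), 0}| dx dv ≤ C · M^ζ · (Leb(Ω))^{1−ζ} · (1+R²)^{−(ζ − (d/2)(1−ζ))}. Note that the exponent ζ − (d/2)(1−ζ) is positive since ζ > d/(d+2), so this tail quantity tends to 0 as R → ∞ uniformly over all f with ∫(1+|v|²)f ≤ M. -/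
/-!
On `{0 < f < 1}` one has `-f log f ≤ f ^ ζ / (1 - ζ)`, so it suffices to bound `∫ f ^ ζ` on the
tail. Writing `f ^ ζ = ((1 + |v|²) f) ^ ζ · (1 + |v|²) ^ (-ζ)`, Hölder's inequality with exponents
`1/ζ` and `1/(1-ζ)` bounds it by `M ^ ζ · (Leb Ω · ∫_{|v| ≥ R} (1 + |v|²) ^ (-s)) ^ (1 - ζ)` with
`s = ζ / (1 - ζ)`. The last integral converges since `2s > d`, and rescaling `v` by `√(1 + R²)`
shows that it is `O((1 + R²) ^ (d/2 - s))`; note `(d/2 - s)(1 - ζ) = -(ζ - (d/2)(1 - ζ))`.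
-/

open MeasureTheory Module
open scoped ENNReal

theorem abs_min_mul_log_zero_le_rpow {ζ t : ℝ} (hζ : ζ < 1) (ht : 0 ≤ t) :
    |min (t * Real.log t) 0| ≤ (1 - ζ)⁻¹ * t ^ ζ := by
  have hζ' : 0 < 1 - ζ := sub_pos.2 hζ
  rcases le_or_gt 1 t with h1 | h1
  · rw [min_eq_right (mul_nonneg ht (Real.log_nonneg h1)), abs_zero]
    positivity
  rcases ht.eq_or_lt with rfl | h0
  · simpa using mul_nonneg (inv_nonneg.2 hζ'.le) (Real.rpow_nonneg le_rfl ζ)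
  have hlog : -Real.log t ≤ t ^ (ζ - 1) / (1 - ζ) := by
    have := Real.log_le_rpow_div (inv_nonneg.2 ht) hζ'
    rwa [Real.log_inv, Real.inv_rpow ht, ← Real.rpow_neg ht, neg_sub] at this
  have hneg : t * Real.log t ≤ 0 := mul_nonpos_of_nonneg_of_nonpos ht (Real.log_nonpos ht h1.le)
  calc |min (t * Real.log t) 0| = t * -Real.log t := by
        rw [min_eq_left hneg, abs_of_nonpos hneg, mul_neg]
    _ ≤ t * (t ^ (ζ - 1) / (1 - ζ)) := by gcongr
    _ = (1 - ζ)⁻¹ * t ^ ζ := by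
        rw [Real.rpow_sub_one h0.ne']
        field_simp

theorem lintegral_ofReal_rpow_le_of_weighted_bounds {α : Type*} [MeasurableSpace α] {μ : Measure α}
    {f w : α → ℝ} (hf : AEMeasurable f μ) (hw : AEMeasurable w μ) (hf0 : ∀ x, 0 ≤ f x)
    (hw0 : ∀ x, 0 < w x) {ζ : ℝ} (hζ0 : 0 < ζ) (hζ1 : ζ < 1) {M N : ℝ} (hM0 : 0 ≤ M)
    (hN0 : 0 ≤ N) (hM : ∫⁻ x, ENNReal.ofReal (w x * f x) ∂μ ≤ ENNReal.ofReal M)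
    (hN : ∫⁻ x, ENNReal.ofReal (w x ^ (-(ζ / (1 - ζ)))) ∂μ ≤ ENNReal.ofReal N) :
    ∫⁻ x, ENNReal.ofReal (f x ^ ζ) ∂μ ≤ ENNReal.ofReal (M ^ ζ * N ^ (1 - ζ)) := by
  have hζ' : 0 < 1 - ζ := sub_pos.2 hζ1
  have hsplit : ∀ x, ENNReal.ofReal (f x ^ ζ) =
      ENNReal.ofReal (w x * f x) ^ ζ * ENNReal.ofReal (w x ^ (-(ζ / (1 - ζ)))) ^ (1 - ζ) := by
    intro x
    have hwx := hw0 x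
    rw [ENNReal.ofReal_rpow_of_nonneg (mul_nonneg hwx.le (hf0 x)) hζ0.le,
      ENNReal.ofReal_rpow_of_nonneg (Real.rpow_nonneg hwx.le _) hζ'.le,
      ← ENNReal.ofReal_mul (Real.rpow_nonneg (mul_nonneg hwx.le (hf0 x)) _),
      Real.mul_rpow hwx.le (hf0 x), ← Real.rpow_mul hwx.le, neg_mul, div_mul_cancel₀ _ hζ'.ne',
      mul_comm, ← mul_assoc, ← Real.rpow_add hwx, neg_add_cancel, Real.rpow_zero, one_mul]
  calc ∫⁻ x, ENNReal.ofReal (f x ^ ζ) ∂μ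
      = ∫⁻ x, ENNReal.ofReal (w x * f x) ^ ζ *
          ENNReal.ofReal (w x ^ (-(ζ / (1 - ζ)))) ^ (1 - ζ) ∂μ := by simp_rw [hsplit]
    _ ≤ (∫⁻ x, ENNReal.ofReal (w x * f x) ∂μ) ^ ζ *
          (∫⁻ x, ENNReal.ofReal (w x ^ (-(ζ / (1 - ζ)))) ∂μ) ^ (1 - ζ) :=
        ENNReal.lintegral_mul_norm_pow_le (by fun_prop) (by fun_prop) hζ0.le hζ'.le (by ring)
    _ ≤ ENNReal.ofReal M ^ ζ * ENNReal.ofReal N ^ (1 - ζ) := by gcongr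
    _ = ENNReal.ofReal (M ^ ζ * N ^ (1 - ζ)) := by
        rw [ENNReal.ofReal_rpow_of_nonneg hM0 hζ0.le, ENNReal.ofReal_rpow_of_nonneg hN0 hζ'.le,
          ENNReal.ofReal_mul (by positivity)]

theorem lintegral_abs_min_mul_log_le_of_weighted_bounds {α : Type*} [MeasurableSpace α]
    {μ : Measure α} {f w : α → ℝ} (hf : AEMeasurable f μ) (hw : AEMeasurable w μ)
    (hf0 : ∀ x, 0 ≤ f x) (hw0 : ∀ x, 0 < w x) {ζ : ℝ} (hζ0 : 0 < ζ) (hζ1 : ζ < 1) {M N : ℝ}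
    (hM0 : 0 ≤ M) (hN0 : 0 ≤ N) (hM : ∫⁻ x, ENNReal.ofReal (w x * f x) ∂μ ≤ ENNReal.ofReal M)
    (hN : ∫⁻ x, ENNReal.ofReal (w x ^ (-(ζ / (1 - ζ)))) ∂μ ≤ ENNReal.ofReal N) :
    ∫⁻ x, ENNReal.ofReal |min (f x * Real.log (f x)) 0| ∂μ ≤
      ENNReal.ofReal ((1 - ζ)⁻¹ * (M ^ ζ * N ^ (1 - ζ))) := by
  have hinv : 0 ≤ (1 - ζ)⁻¹ := inv_nonneg.2 (sub_pos.2 hζ1).le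
  calc ∫⁻ x, ENNReal.ofReal |min (f x * Real.log (f x)) 0| ∂μ
      ≤ ∫⁻ x, ENNReal.ofReal ((1 - ζ)⁻¹ * f x ^ ζ) ∂μ :=
        lintegral_mono fun x ↦ ENNReal.ofReal_le_ofReal (abs_min_mul_log_zero_le_rpow hζ1 (hf0 x))
    _ = ENNReal.ofReal (1 - ζ)⁻¹ * ∫⁻ x, ENNReal.ofReal (f x ^ ζ) ∂μ := by
        simp_rw [ENNReal.ofReal_mul hinv]
        exact lintegral_const_mul' _ _ ENNReal.ofReal_ne_top
    _ ≤ ENNReal.ofReal (1 - ζ)⁻¹ * ENNReal.ofReal (M ^ ζ * N ^ (1 - ζ)) := by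
        gcongr
        exact lintegral_ofReal_rpow_le_of_weighted_bounds hf hw hf0 hw0 hζ0 hζ1 hM0 hN0 hM hN
    _ = ENNReal.ofReal ((1 - ζ)⁻¹ * (M ^ ζ * N ^ (1 - ζ))) := (ENNReal.ofReal_mul hinv).symm

theorem setLIntegral_prod_comp_snd {α β : Type*} [MeasurableSpace α] [MeasurableSpace β]
    {μ : Measure α} {ν : Measure β} [SFinite μ] [SFinite ν] (s : Set α) (t : Set β)
    {g : β → ℝ≥0∞} (hg : Measurable g) :
    ∫⁻ z in s ×ˢ t, g z.2 ∂μ.prod ν = μ s * ∫⁻ y in t, g y ∂ν := by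
  rw [setLIntegral_prod (fun z ↦ g z.2) (hg.comp measurable_snd).aemeasurable]
  simp only [setLIntegral_const, mul_comm]

section HaarScaling

variable {E : Type*} [NormedAddCommGroup E] [NormedSpace ℝ E] [MeasurableSpace E] [BorelSpace E]
  [FiniteDimensional ℝ E] (μ : Measure E) [μ.IsAddHaarMeasure]

theorem lintegral_comp_inv_smul_of_pos (f : E → ℝ≥0∞) {c : ℝ} (hc : 0 < c) :
    ∫⁻ x, f (c⁻¹ • x) ∂μ = ENNReal.ofReal (c ^ finrank ℝ E) * ∫⁻ x, f x ∂μ := by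
  let e : E ≃ᵐ E := (Homeomorph.smul (Units.mk0 c⁻¹ (inv_ne_zero hc.ne'))).toMeasurableEquiv
  have he : Measure.map e μ = ENNReal.ofReal (c ^ finrank ℝ E) • μ := by
    rw [show ⇑e = fun x ↦ c⁻¹ • x from rfl, Measure.map_addHaar_smul μ (inv_ne_zero hc.ne'),
      inv_pow, inv_inv, abs_of_pos (by positivity)]
  change ∫⁻ x, f (e x) ∂μ = _
  rw [← lintegral_map_equiv f e, he, lintegral_smul_measure, smul_eq_mul]

theorem exists_lintegral_tail_one_add_norm_sq_rpow_neg_le {s : ℝ}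
    (hs : (finrank ℝ E : ℝ) < 2 * s) :
    ∃ K, 0 < K ∧ ∀ R, 0 ≤ R →
      ∫⁻ v in {v : E | R ≤ ‖v‖}, ENNReal.ofReal ((1 + ‖v‖ ^ 2) ^ (-s)) ∂μ ≤
        ENNReal.ofReal (K * (1 + R ^ 2) ^ ((finrank ℝ E : ℝ) / 2 - s)) := by
  set g : E → ℝ := fun v ↦ (1 + ‖v‖ ^ 2) ^ (-s) with hg_def
  have hs0 : 0 < s := by linarith [(finrank ℝ E).cast_nonneg (α := ℝ)]
  have hg : Integrable g μ := by
    simpa [hg_def, neg_div] using integrable_rpow_neg_one_add_norm_sq (μ := μ) hs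
  have hg0 : ∀ v, 0 < g v := fun v ↦ by positivity
  have hgI : 0 < ∫ v, g v ∂μ := by
    rw [integral_pos_iff_support_of_nonneg (fun v ↦ (hg0 v).le) hg,
      Function.support_eq_univ fun v ↦ (hg0 v).ne']
    exact Measure.measure_univ_pos.2 (NeZero.ne μ)
  refine ⟨2 ^ s * ∫ v, g v ∂μ, by positivity, fun R hR ↦ ?_⟩
  set c := √(1 + R ^ 2) with hc_def
  have hc : 0 < c := by positivity
  have hc2 : c ^ 2 = 1 + R ^ 2 := Real.sq_sqrt (by positivity)
  -- On the tail `1 + ‖v‖² ≥ (c² + ‖v‖²) / 2 = (c² / 2) (1 + ‖c⁻¹ • v‖²)`.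
  have hpt : ∀ v ∈ {v : E | R ≤ ‖v‖}, g v ≤ ((1 + R ^ 2) / 2) ^ (-s) * g (c⁻¹ • v) := by
    intro v hv
    have hle : (1 + R ^ 2) / 2 * (1 + ‖c⁻¹ • v‖ ^ 2) ≤ 1 + ‖v‖ ^ 2 := by
      rw [norm_smul, Real.norm_eq_abs, abs_inv, abs_of_pos hc, mul_pow, inv_pow, hc2]
      have : R ^ 2 ≤ ‖v‖ ^ 2 := pow_le_pow_left₀ hR hv 2
      field_simp
      linarith
    simp only [hg_def]
    rw [← Real.mul_rpow (by positivity) (by positivity)]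
    exact Real.rpow_le_rpow_of_nonpos (by positivity) hle (by linarith)
  calc ∫⁻ v in {v : E | R ≤ ‖v‖}, ENNReal.ofReal (g v) ∂μ
      ≤ ∫⁻ v, ENNReal.ofReal (((1 + R ^ 2) / 2) ^ (-s) * g (c⁻¹ • v)) ∂μ :=
        (setLIntegral_mono (by fun_prop) fun v hv ↦ ENNReal.ofReal_le_ofReal (hpt v hv)).trans
          (setLIntegral_le_lintegral _ _)
    _ = ENNReal.ofReal (((1 + R ^ 2) / 2) ^ (-s) * c ^ finrank ℝ E * ∫ v, g v ∂μ) := by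
        simp_rw [ENNReal.ofReal_mul (by positivity : (0 : ℝ) ≤ ((1 + R ^ 2) / 2) ^ (-s))]
        rw [lintegral_const_mul' _ _ ENNReal.ofReal_ne_top,
          lintegral_comp_inv_smul_of_pos μ (fun v ↦ ENNReal.ofReal (g v)) hc,
          ← ofReal_integral_eq_lintegral_ofReal hg (ae_of_all _ fun v ↦ (hg0 v).le),
          ENNReal.ofReal_mul (by positivity), ENNReal.ofReal_mul (by positivity), mul_assoc]
    _ = ENNReal.ofReal (2 ^ s * (∫ v, g v ∂μ) * (1 + R ^ 2) ^ ((finrank ℝ E : ℝ) / 2 - s)) := by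
        congr 1
        rw [← Real.rpow_natCast c, hc_def, Real.sqrt_eq_rpow, ← Real.rpow_mul (by positivity),
          Real.div_rpow (by positivity) (by norm_num), Real.rpow_neg (by norm_num : (0:ℝ) ≤ 2),
          sub_eq_add_neg, Real.rpow_add (by positivity)]
        field_simp

end HaarScaling

theorem entropy_negative_part_tail_estimate_general
    (d : ℕ) (ζ : ℝ) (hζ_lb : (d : ℝ) / (d + 2) < ζ) (hζ_ub : ζ < 1) :
    ∃ C : ℝ, 0 < C ∧
      ∀ (Ω : Set (EuclideanSpace ℝ (Fin d))), MeasurableSet Ω → volume Ω < ⊤ →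
        ∀ f : EuclideanSpace ℝ (Fin d) × EuclideanSpace ℝ (Fin d) → ℝ,
          Measurable f → (∀ q, 0 ≤ f q) →
          ∀ M : ℝ, 0 ≤ M →
          (∫⁻ q in Ω ×ˢ (Set.univ : Set (EuclideanSpace ℝ (Fin d))),
              ENNReal.ofReal ((1 + ‖q.2‖ ^ 2) * f q)) = ENNReal.ofReal M →
          ∀ R : ℝ, 0 ≤ R →
          (∫⁻ q in Ω ×ˢ {v : EuclideanSpace ℝ (Fin d) | R ≤ ‖v‖},
              ENNReal.ofReal |min (f q * Real.log (f q)) 0|) ≤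
            ENNReal.ofReal (C * M ^ ζ * (volume Ω).toReal ^ (1 - ζ) *
              (1 + R ^ 2) ^ (-(ζ - ((d : ℝ) / 2) * (1 - ζ)))) := by
  have hζ0 : 0 < ζ := lt_of_le_of_lt (by positivity) hζ_lb
  have hζ' : 0 < 1 - ζ := sub_pos.2 hζ_ub
  set s := ζ / (1 - ζ) with hs
  have hds : (finrank ℝ (EuclideanSpace ℝ (Fin d)) : ℝ) < 2 * s := by
    rw [finrank_euclideanSpace_fin, hs, mul_div_assoc', lt_div_iff₀ hζ']
    rw [div_lt_iff₀ (by positivity)] at hζ_lb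
    linarith
  obtain ⟨K, hK0, hK⟩ := exists_lintegral_tail_one_add_norm_sq_rpow_neg_le volume hds
  rw [finrank_euclideanSpace_fin] at hK
  refine ⟨(1 - ζ)⁻¹ * K ^ (1 - ζ), by positivity, ?_⟩
  intro Ω _ hΩ f hf hf0 M hM hfM R hR
  set tail : Set (EuclideanSpace ℝ (Fin d)) := {v | R ≤ ‖v‖}
  have hmass : ∫⁻ q in Ω ×ˢ tail, ENNReal.ofReal ((1 + ‖q.2‖ ^ 2) * f q) ≤
      ENNReal.ofReal M :=
    hfM ▸ lintegral_mono_set (Set.prod_mono_right (Set.subset_univ _))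
  have hweight : ∫⁻ q in Ω ×ˢ tail, ENNReal.ofReal ((1 + ‖q.2‖ ^ 2) ^ (-s)) ≤
      ENNReal.ofReal ((volume Ω).toReal * (K * (1 + R ^ 2) ^ ((d : ℝ) / 2 - s))) := by
    rw [Measure.volume_eq_prod, setLIntegral_prod_comp_snd Ω tail
        (g := fun v ↦ ENNReal.ofReal ((1 + ‖v‖ ^ 2) ^ (-s))) (by fun_prop),
      ENNReal.ofReal_mul ENNReal.toReal_nonneg, ENNReal.ofReal_toReal hΩ.ne]
    gcongr
    exact hK R hR
  refine (lintegral_abs_min_mul_log_le_of_weighted_bounds (by fun_prop) (by fun_prop) hf0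
    (fun q ↦ by positivity) hζ0 hζ_ub hM (by positivity) hmass hweight).trans_eq ?_
  have hexp : ((d : ℝ) / 2 - s) * (1 - ζ) = -(ζ - (d : ℝ) / 2 * (1 - ζ)) := by
    rw [hs]; field_simp; ring
  rw [Real.mul_rpow ENNReal.toReal_nonneg (by positivity), Real.mul_rpow hK0.le (by positivity),
    ← Real.rpow_mul (by positivity), hexp]
  congr 1
  ring

/-- **Uniform smallness of the negative part of the entropy on large-velocity tails**
(estimate (eq: FLOGF) of the paper). For `ζ ∈ (d/(d+2), 1)` there is a constant `C > 0`,
depending only on `d` and `ζ`, such that for every measurable set `Ω ⊆ ℝ^d` of finite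
measure, every measurable `f ≥ 0` with `∫_{Ω×ℝ^d} (1+|v|²) f = M < ∞`, and every `R ≥ 0`,
`∫_{Ω×{|v|≥R}} |min(f log f, 0)| ≤ C M^ζ (Leb Ω)^{1-ζ} (1+R²)^{-(ζ - (d/2)(1-ζ))}`. -/
theorem entropy_negative_part_tail_estimate
    (d : ℕ) (hd : 1 ≤ d) (ζ : ℝ) (hζ_lb : (d : ℝ) / (d + 2) < ζ) (hζ_ub : ζ < 1) :
    ∃ C : ℝ, 0 < C ∧
      ∀ (Ω : Set (EuclideanSpace ℝ (Fin d))), MeasurableSet Ω → volume Ω < ⊤ →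
        ∀ f : EuclideanSpace ℝ (Fin d) × EuclideanSpace ℝ (Fin d) → ℝ,
          Measurable f → (∀ q, 0 ≤ f q) →
          ∀ M : ℝ, 0 ≤ M →
          (∫⁻ q in Ω ×ˢ (Set.univ : Set (EuclideanSpace ℝ (Fin d))),
              ENNReal.ofReal ((1 + ‖q.2‖ ^ 2) * f q)) = ENNReal.ofReal M →
          ∀ R : ℝ, 0 ≤ R →
          (∫⁻ q in Ω ×ˢ {v : EuclideanSpace ℝ (Fin d) | R ≤ ‖v‖},
              ENNReal.ofReal |min (f q * Real.log (f q)) 0|) ≤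
            ENNReal.ofReal (C * M ^ ζ * (volume Ω).toReal ^ (1 - ζ) *
              (1 + R ^ 2) ^ (-(ζ - ((d : ℝ) / 2) * (1 - ζ)))) :=
  entropy_negative_part_tail_estimate_general d ζ hζ_lb hζ_ub
end
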